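/- arXiv:1707.04038 — 2 statements merged into one kernel-verified Lean document; each statement's English description precedes it below -/
import Mathlib

section
/- Let (Ω, μ) be a measure space, let Φ_* ∈ (0, 1] and let Φ : Ω → ℝ be measurable with Φ_* ≤ Φ(x) ≤ Φ_*^{−1} for μ-almost every x. Let t_f > 0, let N ≥ 1 be an integer, set Δt = t_f/N, let Q ≥ 0, and let c_0, c_1, …, c_N ∈ L²(Ω) satisfy, for every n with 0 ≤ n ≤ N−1, the per-step energy inequality ∫_Ω Φ · ( (c_{n+1})² − (c_n)² ) / (2Δt) dμ ≤ Q · ‖(c_n + c_{n+1})/2‖_{L²(Ω)}. Then, for every ε > 0, ∫_Ω (c_N)² dμ ≤ (1/Φ_*²) ∫_Ω (c_0)² dμ + (t_f/(ε Φ_*)) Q² + (ε t_f/(Φ_* N)) Σ_{n=0}^{N} ∫_Ω (c_n)² dμ. -/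
/-!
Multiplying the per-step inequality by `2Δt` bounds the increment of the weighted energy
`Jₙ = ∫ Φ cₙ²`; Young's inequality `Q √S ≤ Q²/(2ε) + ε S/2` and `((a + b)/2)² ≤ (a² + b²)/2`
turn it into `J_{n+1} - Jₙ ≤ Δt Q²/ε + Δt ε (Iₙ + I_{n+1})/2` with `Iₙ = ∫ cₙ²`. Summing
telescopes the left side, and the bounds on `Φ` give `Φ_* I_N ≤ J_N` and `J₀ ≤ Φ_*⁻¹ I₀`.
-/

open MeasureTheory Finset

theorem sum_range_midpoint_le_sum_range_succ {I : ℕ → ℝ} (hI : ∀ n, 0 ≤ I n) (N : ℕ) :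
    ∑ n ∈ range N, (I n + I (n + 1)) / 2 ≤ ∑ n ∈ range (N + 1), I n := by
  rw [← sum_div, sum_add_distrib]
  linarith [sum_range_succ I N, sum_range_succ' I N, hI 0, hI N]

theorem sub_le_of_forall_succ_sub_le {J I : ℕ → ℝ} {N : ℕ} {A B : ℝ} (hB : 0 ≤ B)
    (hI : ∀ n, 0 ≤ I n) (h : ∀ n < N, J (n + 1) - J n ≤ A + B * ((I n + I (n + 1)) / 2)) :
    J N - J 0 ≤ N * A + B * ∑ n ∈ range (N + 1), I n := by
  calc J N - J 0 = ∑ n ∈ range N, (J (n + 1) - J n) := (sum_range_sub J N).symm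
    _ ≤ ∑ n ∈ range N, (A + B * ((I n + I (n + 1)) / 2)) :=
      sum_le_sum fun n hn => h n (mem_range.mp hn)
    _ = N * A + B * ∑ n ∈ range N, (I n + I (n + 1)) / 2 := by
      rw [sum_add_distrib, sum_const, card_range, nsmul_eq_mul, mul_sum]
    _ ≤ N * A + B * ∑ n ∈ range (N + 1), I n := by
      gcongr
      exact sum_range_midpoint_le_sum_range_succ hI N

theorem natCast_mul_div_le {t : ℝ} (ht : 0 ≤ t) (N : ℕ) : N * (t / N) ≤ t := by
  rcases N.eq_zero_or_pos with rfl | hN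
  · simpa using ht
  · rw [mul_div_cancel₀ t (by positivity)]

section Integrals

variable {Ω : Type*} [MeasurableSpace Ω] {μ : Measure Ω}

theorem integral_sq_midpoint_le {f g : Ω → ℝ} (hf : MemLp f 2 μ) (hg : MemLp g 2 μ) :
    ∫ x, ((f x + g x) / 2) ^ 2 ∂μ ≤ (∫ x, f x ^ 2 ∂μ + ∫ x, g x ^ 2 ∂μ) / 2 := by
  rw [← integral_add hf.integrable_sq hg.integrable_sq, ← integral_div]
  refine integral_mono_of_nonneg (ae_of_all _ fun x => sq_nonneg _)
    ((hf.integrable_sq.add hg.integrable_sq).div_const 2) (ae_of_all _ fun x => ?_)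
  nlinarith [sq_nonneg (f x - g x)]

theorem mul_integral_le_integral_mul {Φ g : Ω → ℝ} {a : ℝ} (hg : Integrable g μ)
    (hΦg : Integrable (fun x => Φ x * g x) μ) (hg0 : ∀ᵐ x ∂μ, 0 ≤ g x)
    (ha : ∀ᵐ x ∂μ, a ≤ Φ x) : a * ∫ x, g x ∂μ ≤ ∫ x, Φ x * g x ∂μ := by
  rw [← integral_const_mul]
  refine integral_mono_ae (hg.const_mul a) hΦg ?_
  filter_upwards [hg0, ha] with x hx0 hxa
  exact mul_le_mul_of_nonneg_right hxa hx0

theorem integral_mul_le_mul_integral {Φ g : Ω → ℝ} {b : ℝ} (hg : Integrable g μ)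
    (hΦg : Integrable (fun x => Φ x * g x) μ) (hg0 : ∀ᵐ x ∂μ, 0 ≤ g x)
    (hb : ∀ᵐ x ∂μ, Φ x ≤ b) : ∫ x, Φ x * g x ∂μ ≤ b * ∫ x, g x ∂μ := by
  rw [← integral_const_mul]
  refine integral_mono_ae hΦg (hg.const_mul b) ?_
  filter_upwards [hg0, hb] with x hx0 hxb
  exact mul_le_mul_of_nonneg_right hxb hx0

theorem weighted_energy_sub_le_of_crank_nicolson_step {Φ f g : Ω → ℝ} {Δt Q ε : ℝ}
    (hΔt : 0 < Δt) (hε : 0 < ε) (hf : MemLp f 2 μ) (hg : MemLp g 2 μ)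
    (hΦf : Integrable (fun x => Φ x * f x ^ 2) μ) (hΦg : Integrable (fun x => Φ x * g x ^ 2) μ)
    (hstep : ∫ x, Φ x * (g x ^ 2 - f x ^ 2) / (2 * Δt) ∂μ ≤
      Q * Real.sqrt (∫ x, ((f x + g x) / 2) ^ 2 ∂μ)) :
    ∫ x, Φ x * g x ^ 2 ∂μ - ∫ x, Φ x * f x ^ 2 ∂μ ≤
      Δt * Q ^ 2 / ε + Δt * ε * ((∫ x, f x ^ 2 ∂μ + ∫ x, g x ^ 2 ∂μ) / 2) := by
  set S := ∫ x, ((f x + g x) / 2) ^ 2 ∂μ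
  have hS : 0 ≤ S := integral_nonneg fun x => sq_nonneg _
  have hincrement : ∫ x, Φ x * (g x ^ 2 - f x ^ 2) / (2 * Δt) ∂μ
      = (∫ x, Φ x * g x ^ 2 ∂μ - ∫ x, Φ x * f x ^ 2 ∂μ) / (2 * Δt) := by
    simp only [integral_div, mul_sub, integral_sub hΦg hΦf]
  have hyoung : 2 * Real.sqrt S * Q ≤ ε * S + ε⁻¹ * Q ^ 2 := by
    simpa [Real.sq_sqrt hS] using two_mul_le_add_mul_sq (a := Real.sqrt S) (b := Q) hε
  rw [hincrement, div_le_iff₀ (by positivity)] at hstep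
  calc _ ≤ Q * Real.sqrt S * (2 * Δt) := hstep
    _ ≤ (ε * S + ε⁻¹ * Q ^ 2) * Δt := by nlinarith
    _ ≤ (ε * ((∫ x, f x ^ 2 ∂μ + ∫ x, g x ^ 2 ∂μ) / 2) + ε⁻¹ * Q ^ 2) * Δt := by
      gcongr
      exact integral_sq_midpoint_le hf hg
    _ = _ := by ring

end Integrals

theorem crank_nicolson_telescoped_energy_estimate_general
    {Ω : Type*} [MeasurableSpace Ω] (μ : Measure Ω)
    (Φs : ℝ) (hΦs : Φs ∈ Set.Ioc (0 : ℝ) 1)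
    (Φ : Ω → ℝ) (hΦmeas : Measurable Φ)
    (hΦbnd : ∀ᵐ x ∂μ, Φs ≤ Φ x ∧ Φ x ≤ Φs⁻¹)
    (tf : ℝ) (htf : 0 < tf) (N : ℕ)
    (Q : ℝ)
    (c : ℕ → Ω → ℝ) (hc : ∀ n ≤ N, MemLp (c n) 2 μ)
    (hstep : ∀ n < N,
      ∫ x, Φ x * ((c (n + 1) x) ^ 2 - (c n x) ^ 2) / (2 * (tf / N)) ∂μ ≤
        Q * Real.sqrt (∫ x, ((c n x + c (n + 1) x) / 2) ^ 2 ∂μ)) :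
    ∀ ε > 0,
      ∫ x, (c N x) ^ 2 ∂μ ≤
        (1 / Φs ^ 2) * ∫ x, (c 0 x) ^ 2 ∂μ + (tf / (ε * Φs)) * Q ^ 2 +
          (ε * tf / (Φs * N)) * ∑ n ∈ Finset.range (N + 1), ∫ x, (c n x) ^ 2 ∂μ := by
  intro ε hε
  have hΦs0 : 0 < Φs := hΦs.1
  set I : ℕ → ℝ := fun n => ∫ x, c n x ^ 2 ∂μ
  set J : ℕ → ℝ := fun n => ∫ x, Φ x * c n x ^ 2 ∂μ
  have hsq0 : ∀ n, ∀ᵐ x ∂μ, 0 ≤ c n x ^ 2 := fun n => ae_of_all _ fun x => sq_nonneg _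
  have hΦc : ∀ n ≤ N, Integrable (fun x => Φ x * c n x ^ 2) μ := fun n hn =>
    (hc n hn).integrable_sq.bdd_mul hΦmeas.aestronglyMeasurable <| by
      filter_upwards [hΦbnd] with x hx
      rw [Real.norm_of_nonneg (hΦs0.le.trans hx.1)]
      exact hx.2
  have htel : J N - J 0 ≤ N * (tf / N * Q ^ 2 / ε) + tf / N * ε * ∑ n ∈ range (N + 1), I n :=
    sub_le_of_forall_succ_sub_le (by positivity) (fun n => integral_nonneg fun x => sq_nonneg _)
      fun n hn => weighted_energy_sub_le_of_crank_nicolson_step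
        (div_pos htf (Nat.cast_pos.mpr (n.zero_lt_of_lt hn))) hε (hc n hn.le) (hc (n + 1) hn)
        (hΦc n hn.le) (hΦc (n + 1) hn) (hstep n hn)
  have hJN : Φs * I N ≤ J N := mul_integral_le_integral_mul (hc N le_rfl).integrable_sq
    (hΦc N le_rfl) (hsq0 N) (hΦbnd.mono fun _ hx => hx.1)
  have hJ0 : J 0 ≤ Φs⁻¹ * I 0 := integral_mul_le_mul_integral (hc 0 N.zero_le).integrable_sq
    (hΦc 0 N.zero_le) (hsq0 0) (hΦbnd.mono fun _ hx => hx.2)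
  have hsource : N * (tf / N * Q ^ 2 / ε) ≤ tf * Q ^ 2 / ε := by
    rw [← mul_div_assoc, ← mul_assoc]
    gcongr
    exact natCast_mul_div_le htf.le N
  calc I N = Φs⁻¹ * (Φs * I N) := by field_simp
    _ ≤ Φs⁻¹ * (Φs⁻¹ * I 0 + tf * Q ^ 2 / ε + tf / N * ε * ∑ n ∈ range (N + 1), I n) := by
      gcongr
      linarith
    _ = _ := by field_simp; ring

/-- Telescoped energy estimate underlying the L² stability proof of the Crank–Nicolson
HHO scheme: if the porosity `Φ` satisfies `Φ_* ≤ Φ ≤ Φ_*⁻¹` a.e. (`0 < Φ_* ≤ 1`),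
`Δt = t_f/N`, and the discrete concentrations `c_0, …, c_N ∈ L²(Ω)` satisfy the
per-step energy inequality, then for every `ε > 0`,
`∫ c_N² ≤ (1/Φ_*²) ∫ c_0² + (t_f/(ε Φ_*)) Q² + (ε t_f/(Φ_* N)) Σ_{n=0}^N ∫ c_n²`. -/
theorem crank_nicolson_telescoped_energy_estimate
    {Ω : Type*} [MeasurableSpace Ω] (μ : Measure Ω)
    (Φs : ℝ) (hΦs : Φs ∈ Set.Ioc (0 : ℝ) 1)
    (Φ : Ω → ℝ) (hΦmeas : Measurable Φ)
    (hΦbnd : ∀ᵐ x ∂μ, Φs ≤ Φ x ∧ Φ x ≤ Φs⁻¹)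
    (tf : ℝ) (htf : 0 < tf) (N : ℕ) (hN : 1 ≤ N)
    (Q : ℝ) (hQ : 0 ≤ Q)
    (c : ℕ → Ω → ℝ) (hc : ∀ n ≤ N, MemLp (c n) 2 μ)
    (hstep : ∀ n < N,
      ∫ x, Φ x * ((c (n + 1) x) ^ 2 - (c n x) ^ 2) / (2 * (tf / N)) ∂μ ≤
        Q * Real.sqrt (∫ x, ((c n x + c (n + 1) x) / 2) ^ 2 ∂μ)) :
    ∀ ε > 0,
      ∫ x, (c N x) ^ 2 ∂μ ≤
        (1 / Φs ^ 2) * ∫ x, (c 0 x) ^ 2 ∂μ + (tf / (ε * Φs)) * Q ^ 2 +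
          (ε * tf / (Φs * N)) * ∑ n ∈ Finset.range (N + 1), ∫ x, (c n x) ^ 2 ∂μ :=
  crank_nicolson_telescoped_energy_estimate_general μ Φs hΦs Φ hΦmeas hΦbnd tf htf N Q c hc hstep
end

section
/- Let (Ω, μ) be a measure space, let Φ_* ∈ (0, 1] and let Φ : Ω → ℝ be measurable with Φ_* ≤ Φ(x) ≤ Φ_*^{−1} for μ-almost every x. Let t_f > 0, let N ≥ 1 be an integer, set Δt = t_f/N, let Q ≥ 0, and let c_0, c_1, …, c_N ∈ L²(Ω) satisfy, for every n with 0 ≤ n ≤ N−1, the per-step energy inequality ∫_Ω Φ · ( (c_{n+1})² − (c_n)² ) / (2Δt) dμ ≤ Q · ‖(c_n + c_{n+1})/2‖_{L²(Ω)}. Then for every n with 0 ≤ n ≤ N, ‖c_n‖²_{L²(Ω)} ≤ (e²/Φ_*²) ( ‖c_0‖²_{L²(Ω)} + 2 t_f² Q² ). -/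
/-!
With `A n = ∫ Φ c_n²`, the energy inequality, Minkowski's inequality for the midpoint
`(c_n + c_{n+1})/2` and the porosity bounds give
`A (n+1) - A n ≤ Δt K (√(A n) + √(A (n+1)))` with `K = |Q| / √Φ_*`; cancelling the factor
`√(A n) + √(A (n+1))` shows that `√A` grows by at most `Δt K` per step. Hence
`√(A n) ≤ √(A 0) + t_f K`, and squaring and comparing `A` with `‖c‖²` through the porosity bounds
gives the estimate with the constant `2 / Φ_*² ≤ e² / Φ_*²`.
-/

open MeasureTheory

theorem Real.sqrt_le_sqrt_add_of_sub_le_mul_add {a b k : ℝ} (ha : 0 ≤ a) (hb : 0 ≤ b)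
    (hk : 0 ≤ k) (h : b - a ≤ k * (√a + √b)) : √b ≤ √a + k := by
  have hfac : b - a = (√b - √a) * (√a + √b) := by
    nth_rewrite 1 [← Real.sq_sqrt ha, ← Real.sq_sqrt hb]
    ring
  rcases (add_nonneg (Real.sqrt_nonneg a) (Real.sqrt_nonneg b)).eq_or_lt with hs | hs
  · linarith [Real.sqrt_nonneg a, Real.sqrt_nonneg b]
  · rw [hfac] at h
    linarith [le_of_mul_le_mul_right h hs]

theorem Real.le_two_mul_add_sq_of_sqrt_le_sqrt_add {a b t : ℝ} (ha : 0 ≤ a)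
    (h : √b ≤ √a + t) : b ≤ 2 * (a + t ^ 2) := by
  calc b ≤ (√a + t) ^ 2 := (Real.sqrt_le_iff.mp h).2
    _ ≤ 2 * (√a ^ 2 + t ^ 2) := add_sq_le
    _ = 2 * (a + t ^ 2) := by rw [Real.sq_sqrt ha]

theorem le_add_nat_mul_of_forall_lt_le_add {s : ℕ → ℝ} {d : ℝ} {N : ℕ}
    (h : ∀ n < N, s (n + 1) ≤ s n + d) : ∀ n ≤ N, s n ≤ s 0 + n * d := by
  intro n hn
  induction n with
  | zero => simp
  | succ n ih =>
    push_cast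
    linarith [h n hn, ih (Nat.le_of_succ_le hn)]

namespace MeasureTheory

variable {Ω : Type*} [MeasurableSpace Ω] {μ : Measure Ω} {u v : Ω → ℝ}

theorem sqrt_integral_sq_eq_lpNorm (hu : AEStronglyMeasurable u μ) :
    √(∫ x, u x ^ 2 ∂μ) = lpNorm u 2 μ := by
  rw [lpNorm_eq_integral_norm_rpow_toReal two_ne_zero ENNReal.ofNat_ne_top hu,
    Real.sqrt_eq_rpow]
  norm_num [Real.norm_eq_abs]

theorem lpNorm_midpoint_le (hu : MemLp u 2 μ) :
    lpNorm (fun x ↦ (u x + v x) / 2) 2 μ ≤ (lpNorm u 2 μ + lpNorm v 2 μ) / 2 := by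
  calc lpNorm (fun x ↦ (u x + v x) / 2) 2 μ = lpNorm (u + v) 2 μ / 2 := by
        simpa using lpNorm_fun_div_natCast (n := 2) two_ne_zero (u + v) 2 μ
    _ ≤ _ := by gcongr; exact lpNorm_add_le hu one_le_two

variable {Φ : Ω → ℝ} {Φs : ℝ}

theorem integral_mul_sq_nonneg (hΦ : ∀ᵐ x ∂μ, 0 ≤ Φ x) : 0 ≤ ∫ x, Φ x * u x ^ 2 ∂μ :=
  integral_nonneg_of_ae <| hΦ.mono fun _ hx ↦ mul_nonneg hx (sq_nonneg _)

theorem integrable_mul_sq_of_ae_bounds (hΦs : 0 < Φs) (hΦ : AEStronglyMeasurable Φ μ)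
    (hΦbnd : ∀ᵐ x ∂μ, Φs ≤ Φ x ∧ Φ x ≤ Φs⁻¹) (hu : MemLp u 2 μ) :
    Integrable (fun x ↦ Φ x * u x ^ 2) μ :=
  hu.integrable_sq.bdd_mul hΦ <| hΦbnd.mono fun x hx ↦
    abs_le.mpr ⟨by linarith [hx.1], hx.2⟩

theorem mul_integral_sq_le_integral_mul_sq (hΦs : 0 < Φs) (hΦ : AEStronglyMeasurable Φ μ)
    (hΦbnd : ∀ᵐ x ∂μ, Φs ≤ Φ x ∧ Φ x ≤ Φs⁻¹) (hu : MemLp u 2 μ) :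
    Φs * ∫ x, u x ^ 2 ∂μ ≤ ∫ x, Φ x * u x ^ 2 ∂μ := by
  rw [← integral_const_mul]
  exact integral_mono_ae (hu.integrable_sq.const_mul Φs)
    (integrable_mul_sq_of_ae_bounds hΦs hΦ hΦbnd hu)
    (hΦbnd.mono fun x hx ↦ mul_le_mul_of_nonneg_right hx.1 (sq_nonneg _))

theorem integral_mul_sq_le_inv_mul_integral_sq (hΦs : 0 < Φs) (hΦ : AEStronglyMeasurable Φ μ)
    (hΦbnd : ∀ᵐ x ∂μ, Φs ≤ Φ x ∧ Φ x ≤ Φs⁻¹) (hu : MemLp u 2 μ) :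
    ∫ x, Φ x * u x ^ 2 ∂μ ≤ Φs⁻¹ * ∫ x, u x ^ 2 ∂μ := by
  rw [← integral_const_mul]
  exact integral_mono_ae (integrable_mul_sq_of_ae_bounds hΦs hΦ hΦbnd hu)
    (hu.integrable_sq.const_mul Φs⁻¹)
    (hΦbnd.mono fun x hx ↦ mul_le_mul_of_nonneg_right hx.2 (sq_nonneg _))

theorem sqrt_integral_mul_sq_le_of_energy_step (hΦs : 0 < Φs) (hΦ : AEStronglyMeasurable Φ μ)
    (hΦbnd : ∀ᵐ x ∂μ, Φs ≤ Φ x ∧ Φ x ≤ Φs⁻¹) {Δt Q : ℝ} (hΔt : 0 < Δt)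
    (hu : MemLp u 2 μ) (hv : MemLp v 2 μ)
    (hstep : ∫ x, Φ x * (v x ^ 2 - u x ^ 2) / (2 * Δt) ∂μ ≤
      Q * √(∫ x, ((u x + v x) / 2) ^ 2 ∂μ)) :
    √(∫ x, Φ x * v x ^ 2 ∂μ) ≤ √(∫ x, Φ x * u x ^ 2 ∂μ) + Δt * (|Q| / √Φs) := by
  set Au := ∫ x, Φ x * u x ^ 2 ∂μ
  set Av := ∫ x, Φ x * v x ^ 2 ∂μ
  have hsΦ : 0 < √Φs := Real.sqrt_pos.mpr hΦs
  have hnorm {w : Ω → ℝ} (hw : MemLp w 2 μ) :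
      lpNorm w 2 μ ≤ √(∫ x, Φ x * w x ^ 2 ∂μ) / √Φs := by
    rw [← sqrt_integral_sq_eq_lpNorm hw.aestronglyMeasurable, le_div_iff₀ hsΦ,
      ← Real.sqrt_mul (integral_nonneg fun _ ↦ sq_nonneg _), mul_comm]
    exact Real.sqrt_le_sqrt (mul_integral_sq_le_integral_mul_sq hΦs hΦ hΦbnd hw)
  have hdiff : ∫ x, Φ x * (v x ^ 2 - u x ^ 2) / (2 * Δt) ∂μ = (Av - Au) / (2 * Δt) := by
    simp_rw [mul_sub]
    rw [integral_div, integral_sub (integrable_mul_sq_of_ae_bounds hΦs hΦ hΦbnd hv)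
      (integrable_mul_sq_of_ae_bounds hΦs hΦ hΦbnd hu)]
  have hmid : Q * √(∫ x, ((u x + v x) / 2) ^ 2 ∂μ) ≤ |Q| * ((√Au / √Φs + √Av / √Φs) / 2) := by
    rw [sqrt_integral_sq_eq_lpNorm
      (by have := hu.aestronglyMeasurable; have := hv.aestronglyMeasurable; fun_prop)]
    calc Q * lpNorm (fun x ↦ (u x + v x) / 2) 2 μ
        ≤ |Q| * lpNorm (fun x ↦ (u x + v x) / 2) 2 μ :=
          mul_le_mul_of_nonneg_right (le_abs_self Q) lpNorm_nonneg
      _ ≤ |Q| * ((lpNorm u 2 μ + lpNorm v 2 μ) / 2) := by gcongr; exact lpNorm_midpoint_le hu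
      _ ≤ |Q| * ((√Au / √Φs + √Av / √Φs) / 2) := by gcongr <;> exact hnorm ‹_›
  have hΦ0 : ∀ᵐ x ∂μ, 0 ≤ Φ x := hΦbnd.mono fun _ hx ↦ hΦs.le.trans hx.1
  refine Real.sqrt_le_sqrt_add_of_sub_le_mul_add (integral_mul_sq_nonneg hΦ0)
    (integral_mul_sq_nonneg hΦ0) (by positivity) ?_
  have h := hdiff ▸ hstep.trans hmid
  rw [div_le_iff₀ (by positivity)] at h
  calc Av - Au ≤ _ := h
    _ = _ := by field_simp

end MeasureTheory

theorem crank_nicolson_L2_stability_general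
    {Ω : Type*} [MeasurableSpace Ω] (μ : Measure Ω)
    (Φs : ℝ) (hΦs : Φs ∈ Set.Ioc (0 : ℝ) 1)
    (Φ : Ω → ℝ) (hΦmeas : Measurable Φ)
    (hΦbnd : ∀ᵐ x ∂μ, Φs ≤ Φ x ∧ Φ x ≤ Φs⁻¹)
    (tf : ℝ) (htf : 0 < tf) (N : ℕ)
    (Q : ℝ)
    (c : ℕ → Ω → ℝ) (hc : ∀ n ≤ N, MemLp (c n) 2 μ)
    (hstep : ∀ n < N,
      ∫ x, Φ x * ((c (n + 1) x) ^ 2 - (c n x) ^ 2) / (2 * (tf / N)) ∂μ ≤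
        Q * Real.sqrt (∫ x, ((c n x + c (n + 1) x) / 2) ^ 2 ∂μ)) :
    ∀ n ≤ N,
      ∫ x, (c n x) ^ 2 ∂μ ≤
        (Real.exp 1 ^ 2 / Φs ^ 2) *
          ((∫ x, (c 0 x) ^ 2 ∂μ) + 2 * tf ^ 2 * Q ^ 2) := by
  intro n hn
  have hΦs0 : 0 < Φs := hΦs.1
  have hΦ : AEStronglyMeasurable Φ μ := hΦmeas.aestronglyMeasurable
  set A : ℕ → ℝ := fun k ↦ ∫ x, Φ x * c k x ^ 2 ∂μ
  set K := |Q| / √Φs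
  have hgrowth : √(A n) ≤ √(A 0) + n * (tf / N * K) :=
    le_add_nat_mul_of_forall_lt_le_add (s := fun k ↦ √(A k)) (fun k hk ↦
      sqrt_integral_mul_sq_le_of_energy_step hΦs0 hΦ hΦbnd
        (div_pos htf (Nat.cast_pos.mpr (Nat.zero_lt_of_lt hk))) (hc k hk.le) (hc (k + 1) hk)
        (hstep k hk)) n hn
  have htime : n * (tf / N * K) ≤ tf * K := by
    have hnN : (n : ℝ) / N ≤ 1 := div_le_one_of_le₀ (Nat.cast_le.mpr hn) N.cast_nonneg
    calc n * (tf / N * K) = tf * (n / N) * K := by ring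
      _ ≤ tf * K := by gcongr; exact mul_le_of_le_one_right htf.le hnN
  have hK : (tf * K) ^ 2 = tf ^ 2 * Q ^ 2 / Φs := by
    rw [mul_pow, div_pow, sq_abs, Real.sq_sqrt hΦs0.le, mul_div_assoc]
  have hAn : A n ≤ 2 * (A 0 + tf ^ 2 * Q ^ 2 / Φs) :=
    hK ▸ Real.le_two_mul_add_sq_of_sqrt_le_sqrt_add
      (integral_mul_sq_nonneg (hΦbnd.mono fun _ hx ↦ hΦs0.le.trans hx.1))
      (hgrowth.trans (by linarith))
  have hA0_le := integral_mul_sq_le_inv_mul_integral_sq hΦs0 hΦ hΦbnd (hc 0 (Nat.zero_le N))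
  have hAn_ge := mul_integral_sq_le_integral_mul_sq hΦs0 hΦ hΦbnd (hc n hn)
  have he : 2 ≤ Real.exp 1 ^ 2 := by nlinarith [Real.add_one_le_exp 1]
  calc ∫ x, c n x ^ 2 ∂μ ≤ A n / Φs := by rw [le_div_iff₀ hΦs0]; linarith
    _ ≤ 2 * (Φs⁻¹ * ∫ x, c 0 x ^ 2 ∂μ + tf ^ 2 * Q ^ 2 / Φs) / Φs := by gcongr; linarith
    _ = 2 / Φs ^ 2 * (∫ x, c 0 x ^ 2 ∂μ + tf ^ 2 * Q ^ 2) := by field_simp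
    _ ≤ _ := by gcongr; nlinarith

/-- Abstract form of the L² stability estimate of Theorem 3.2 for the Crank–Nicolson
HHO scheme: under the per-step energy inequality with porosity bounds
`Φ_* ≤ Φ ≤ Φ_*⁻¹` (`0 < Φ_* ≤ 1`) and `Δt = t_f/N`, one has for every `0 ≤ n ≤ N`
`‖c_n‖²_{L²} ≤ (e²/Φ_*²) (‖c_0‖²_{L²} + 2 t_f² Q²)`. -/
theorem crank_nicolson_L2_stability
    {Ω : Type*} [MeasurableSpace Ω] (μ : Measure Ω)
    (Φs : ℝ) (hΦs : Φs ∈ Set.Ioc (0 : ℝ) 1)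
    (Φ : Ω → ℝ) (hΦmeas : Measurable Φ)
    (hΦbnd : ∀ᵐ x ∂μ, Φs ≤ Φ x ∧ Φ x ≤ Φs⁻¹)
    (tf : ℝ) (htf : 0 < tf) (N : ℕ) (hN : 1 ≤ N)
    (Q : ℝ) (hQ : 0 ≤ Q)
    (c : ℕ → Ω → ℝ) (hc : ∀ n ≤ N, MemLp (c n) 2 μ)
    (hstep : ∀ n < N,
      ∫ x, Φ x * ((c (n + 1) x) ^ 2 - (c n x) ^ 2) / (2 * (tf / N)) ∂μ ≤
        Q * Real.sqrt (∫ x, ((c n x + c (n + 1) x) / 2) ^ 2 ∂μ)) :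
    ∀ n ≤ N,
      ∫ x, (c n x) ^ 2 ∂μ ≤
        (Real.exp 1 ^ 2 / Φs ^ 2) *
          ((∫ x, (c 0 x) ^ 2 ∂μ) + 2 * tf ^ 2 * Q ^ 2) :=
  crank_nicolson_L2_stability_general μ Φs hΦs Φ hΦmeas hΦbnd tf htf N Q c hc hstep
end
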